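/- arXiv:1802.06387 — 2 statements merged into one kernel-verified Lean document; each statement's English description precedes it below -/
import Mathlib

section
/- Let N ≥ 1, let S₁,…,S_N be finite nonempty index sets, let (Ω, 𝔄, ν) be a probability space, and for each site n and each setting s ∈ Sₙ let ω ↦ P_{n,s}(·|ω) be a Markov kernel from Ω to the interval [-1,1]. For each tuple of settings s = (s₁,…,s_N) let f_s : [-1,1]^N → ℝ be a bounded measurable function. Define the scenario value B = Σ_s ∫_Ω [∫_{[-1,1]^N} f_s d(P_{1,s₁}(·|ω) ⊗ ⋯ ⊗ P_{N,s_N}(·|ω))] dν(ω). Then B_Φ^inf ≤ B ≤ B_Φ^sup, where B_Φ^sup (respectively B_Φ^inf) is the supremum (respectively infimum), over all families of points λₙ^{(s)} ∈ [-1,1] for n = 1,…,N and s ∈ Sₙ, of Σ_s f_s(λ₁^{(s₁)},…,λ_N^{(s_N)}). -/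
/-!
Fix ω and couple all local response laws at once: under the product measure `⊗ₙ ⊗ₜ P n t ω`
on outcome assignments `Λ : ∀ n, S n → [-1,1]`, the joint law for the settings `s` is the
image of this measure under `Λ ↦ (Λ n (s n))ₙ`. Hence the ω-value of the Bell functional is
the average over `Λ` of the deterministic value `∑ s, f s (Λ n (s n))ₙ`, so it lies between
the infimum and the supremum of that value; integrating over `ν` keeps it there.
-/

open MeasureTheory ProbabilityTheory

open Set

theorem mem_Icc_ciInf_ciSup_of_abs_le {α : Type*} {g : α → ℝ} {C : ℝ} (h : ∀ x, |g x| ≤ C)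
    (x : α) : g x ∈ Icc (⨅ y, g y) (⨆ y, g y) :=
  ⟨ciInf_le ⟨-C, by rintro _ ⟨y, rfl⟩; exact (abs_le.1 (h y)).1⟩ x,
    le_ciSup ⟨C, by rintro _ ⟨y, rfl⟩; exact (abs_le.1 (h y)).2⟩ x⟩

section

variable {α : Type*} [MeasurableSpace α] {ι : Type*} [Fintype ι]
  {X : ι → Type*} [∀ i, MeasurableSpace (X i)]

theorem measurable_measure_pi {μ : ∀ i, α → Measure (X i)}
    [∀ i a, IsProbabilityMeasure (μ i a)]
    (hμ : ∀ i, Measurable (μ i)) : Measurable fun a => Measure.pi fun i => μ i a := by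
  refine .measure_of_isPiSystem_of_isProbabilityMeasure generateFrom_pi.symm isPiSystem_pi ?_
  rintro _ ⟨s, hs, rfl⟩
  simp_rw [Measure.pi_pi]
  exact Finset.measurable_prod _ fun i _ =>
    (Measure.measurable_coe (hs i (mem_univ i))).comp (hμ i)

theorem stronglyMeasurable_integral_measure_pi {E : Type*} [NormedAddCommGroup E]
    [NormedSpace ℝ E] (κ : ∀ i, Kernel α (X i)) [∀ i, IsMarkovKernel (κ i)]
    {f : (∀ i, X i) → E} (hf : StronglyMeasurable f) :
    StronglyMeasurable fun a => ∫ x, f x ∂(Measure.pi fun i => κ i a) := by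
  let K : Kernel α (∀ i, X i) := ⟨_, measurable_measure_pi fun i => (κ i).measurable⟩
  have : IsMarkovKernel K := ⟨fun a => by dsimp [K]; infer_instance⟩
  exact (hf.comp_measurable measurable_snd).integral_kernel_prod_right' (κ := K)

theorem integrable_integral_measure_pi {E : Type*} [NormedAddCommGroup E]
    [NormedSpace ℝ E] (κ : ∀ i, Kernel α (X i)) [∀ i, IsMarkovKernel (κ i)]
    {f : (∀ i, X i) → E} (hf : StronglyMeasurable f) {C : ℝ} (hC : ∀ x, ‖f x‖ ≤ C)
    (ν : Measure α) [IsFiniteMeasure ν] :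
    Integrable (fun a => ∫ x, f x ∂(Measure.pi fun i => κ i a)) ν :=
  .of_bound (stronglyMeasurable_integral_measure_pi κ hf).aestronglyMeasurable C
    (.of_forall fun a => by
      simpa using norm_integral_le_of_norm_le_const (μ := Measure.pi fun i => κ i a)
        (.of_forall hC))

theorem Measure.pi_pi_map_eval {S : ι → Type*} [∀ i, Fintype (S i)]
    (μ : ∀ i, S i → Measure (X i)) [∀ i t, IsProbabilityMeasure (μ i t)] (s : ∀ i, S i) :
    (Measure.pi fun i => Measure.pi (μ i)).map (fun Λ i => Λ i (s i))
      = Measure.pi fun i => μ i (s i) := by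
  have hmarg (i : ι) : (Measure.pi (μ i)).map (Function.eval (s i)) = μ i (s i) :=
    (measurePreserving_eval (μ i) (s i)).map_eq
  rw [Measure.pi_map_pi (hμ := fun i => by rw [hmarg]; infer_instance)
    fun i => (measurable_pi_apply (s i)).aemeasurable]
  simp_rw [hmarg]

theorem sum_integral_pi_eq_integral_pi_pi [DecidableEq ι] {S : ι → Type*}
    [∀ i, Fintype (S i)]
    (μ : ∀ i, S i → Measure (X i)) [∀ i t, IsProbabilityMeasure (μ i t)]
    {f : (∀ i, S i) → (∀ i, X i) → ℝ} (hf : ∀ s, Measurable (f s))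
    (hbdd : ∀ s, ∃ C, ∀ x, |f s x| ≤ C) :
    ∑ s, ∫ x, f s x ∂(Measure.pi fun i => μ i (s i))
      = ∫ Λ, ∑ s, f s (fun i => Λ i (s i)) ∂(Measure.pi fun i => Measure.pi (μ i)) := by
  have hrestrict (s : ∀ i, S i) : Measurable fun (Λ : ∀ i, S i → X i) i => Λ i (s i) :=
    measurable_pi_lambda _ fun i => (measurable_pi_apply (s i)).comp (measurable_pi_apply i)
  rw [integral_finsetSum _ fun s _ => ?_]
  · refine Finset.sum_congr rfl fun s _ => ?_
    rw [← Measure.pi_pi_map_eval,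
      integral_map (hrestrict s).aemeasurable (hf s).aestronglyMeasurable]
  · obtain ⟨C, hC⟩ := hbdd s
    exact .of_bound ((hf s).comp (hrestrict s)).aestronglyMeasurable C
      (.of_forall fun x => hC _)

theorem integral_mem_Icc {μ : Measure α} [IsProbabilityMeasure μ] {F : α → ℝ} {a b : ℝ}
    (hF : Integrable F μ) (h : ∀ᵐ x ∂μ, F x ∈ Icc a b) : ∫ x, F x ∂μ ∈ Icc a b := by
  have hlower := integral_mono_ae (integrable_const a) hF (h.mono fun _ hx => hx.1)
  have hupper := integral_mono_ae hF (integrable_const b) (h.mono fun _ hx => hx.2)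
  simp only [integral_const, probReal_univ, one_smul] at hlower hupper
  exact ⟨hlower, hupper⟩

end

theorem lhv_scenario_value_mem_Icc_inf_sup_general
    (N : ℕ)
    (S : Fin N → Type) [∀ n, Fintype (S n)]
    {Ω : Type} [MeasurableSpace Ω] (ν : Measure Ω) [IsProbabilityMeasure ν]
    (P : ∀ n, S n → Kernel Ω (Set.Icc (-1 : ℝ) 1))
    (hP : ∀ n s, IsMarkovKernel (P n s))
    (f : (∀ n, S n) → ((Fin N → Set.Icc (-1 : ℝ) 1) → ℝ))
    (hmeas : ∀ s, Measurable (f s))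
    (hbdd : ∀ s, ∃ C : ℝ, ∀ lam, |f s lam| ≤ C) :
    (⨅ lam : ∀ n, S n → Set.Icc (-1 : ℝ) 1,
        ∑ s : ∀ n, S n, f s (fun n => lam n (s n))) ≤
      (∑ s : ∀ n, S n,
        ∫ ω, (∫ lam, f s lam ∂(Measure.pi fun n => P n (s n) ω)) ∂ν) ∧
    (∑ s : ∀ n, S n,
        ∫ ω, (∫ lam, f s lam ∂(Measure.pi fun n => P n (s n) ω)) ∂ν) ≤
      ⨆ lam : ∀ n, S n → Set.Icc (-1 : ℝ) 1,
        ∑ s : ∀ n, S n, f s (fun n => lam n (s n)) := by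
  choose C hC using hbdd
  set g : (∀ n, S n → Set.Icc (-1 : ℝ) 1) → ℝ :=
    fun lam => ∑ s, f s (fun n => lam n (s n))
  have hg_bdd (lam) : |g lam| ≤ ∑ s, C s :=
    (Finset.abs_sum_le_sum_abs _ _).trans (Finset.sum_le_sum fun s _ => hC s _)
  have hg_meas : Measurable g := by fun_prop
  have hvalue (ω : Ω) : ∑ s, ∫ lam, f s lam ∂(Measure.pi fun n => P n (s n) ω)
      ∈ Icc (⨅ lam, g lam) (⨆ lam, g lam) := by
    rw [sum_integral_pi_eq_integral_pi_pi (fun n t => P n t ω) hmeas fun s => ⟨C s, hC s⟩]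
    exact integral_mem_Icc (.of_bound hg_meas.aestronglyMeasurable _ (.of_forall hg_bdd))
      (.of_forall (mem_Icc_ciInf_ciSup_of_abs_le hg_bdd))
  have hint (s : ∀ n, S n) :
      Integrable (fun ω => ∫ lam, f s lam ∂(Measure.pi fun n => P n (s n) ω)) ν :=
    integrable_integral_measure_pi _ (hmeas s).stronglyMeasurable (hC s) ν
  rw [← integral_finsetSum _ fun s _ => hint s]
  exact integral_mem_Icc (integrable_finsetSum _ fun s _ => hint s) (.of_forall hvalue)

/-- tight LHV constraint: if all joint probability distributions of a correlation
scenario are given by an LHV model with hidden-variable probability space `(Ω, ν)` and Markov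
kernels `P n s` from `Ω` to `[-1,1]`, then the scenario value
`B = ∑ s, ∫_Ω (∫ f s d(⊗ₙ P n (s n) ω)) dν(ω)` of any Bell functional given by bounded
measurable functions `f s : [-1,1]^N → ℝ` satisfies `B_Φ^inf ≤ B ≤ B_Φ^sup`. -/
theorem lhv_scenario_value_mem_Icc_inf_sup
    (N : ℕ) (hN : 1 ≤ N)
    (S : Fin N → Type) [∀ n, Fintype (S n)] [∀ n, Nonempty (S n)]
    {Ω : Type} [MeasurableSpace Ω] (ν : Measure Ω) [IsProbabilityMeasure ν]
    (P : ∀ n, S n → Kernel Ω (Set.Icc (-1 : ℝ) 1))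
    (hP : ∀ n s, IsMarkovKernel (P n s))
    (f : (∀ n, S n) → ((Fin N → Set.Icc (-1 : ℝ) 1) → ℝ))
    (hmeas : ∀ s, Measurable (f s))
    (hbdd : ∀ s, ∃ C : ℝ, ∀ lam, |f s lam| ≤ C) :
    (⨅ lam : ∀ n, S n → Set.Icc (-1 : ℝ) 1,
        ∑ s : ∀ n, S n, f s (fun n => lam n (s n))) ≤
      (∑ s : ∀ n, S n,
        ∫ ω, (∫ lam, f s lam ∂(Measure.pi fun n => P n (s n) ω)) ∂ν) ∧
    (∑ s : ∀ n, S n,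
        ∫ ω, (∫ lam, f s lam ∂(Measure.pi fun n => P n (s n) ω)) ∂ν) ≤
      ⨆ lam : ∀ n, S n → Set.Icc (-1 : ℝ) 1,
        ∑ s : ∀ n, S n, f s (fun n => lam n (s n)) :=
  lhv_scenario_value_mem_Icc_inf_sup_general N S ν P hP f hmeas hbdd
end

section
/- Under the hypotheses of the tight LHV constraint (N ≥ 1 parties, finite setting sets Sₙ, a probability space (Ω, 𝔄, ν), Markov kernels P_{n,s}(·|ω) from Ω to [-1,1], and bounded measurable functions f_s : [-1,1]^N → ℝ), the absolute value of the scenario value B = Σ_s ∫_Ω [∫ f_s d(P_{1,s₁}(·|ω) ⊗ ⋯ ⊗ P_{N,s_N}(·|ω))] dν(ω) satisfies |B| ≤ max{|B_Φ^sup|, |B_Φ^inf|}, where B_Φ^sup and B_Φ^inf are the supremum and infimum over all families of points λₙ^{(s)} ∈ [-1,1] of Σ_s f_s(λ₁^{(s₁)},…,λ_N^{(s_N)}). -/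
/-!
For fixed `ω`, draw the outcomes of all settings at once: `λ = (λₙ⁽ᵗ⁾)ₙ,ₜ` distributed as the
product of all kernels `P n t ω`. Selecting the coordinates `λₙ⁽ˢⁿ⁾` pushes this joint law
forward to the scenario law `⊗ₙ P n (s n) ω`, so the inner sum `∑ₛ ∫ fₛ` equals the integral of
the deterministic value `∑ₛ fₛ(λ₁⁽ˢ¹⁾, …, λ_N⁽ˢᴺ⁾)`, which lies in `[B^inf, B^sup]`. Averaging over
`ν` stays in that interval, and `|x| ≤ max |a| |b|` for every `x ∈ [a, b]`.
-/

open MeasureTheory ProbabilityTheory Set Finset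

namespace ProbabilityTheory.Kernel

variable {α : Type*} [MeasurableSpace α]

lemma integrable_integral_of_norm_le {β E : Type*} [MeasurableSpace β] [NormedAddCommGroup E]
    [NormedSpace ℝ E] {μ : Measure α} [IsFiniteMeasure μ] (κ : Kernel α β) [IsMarkovKernel κ]
    {f : β → E} (hf : StronglyMeasurable f) {C : ℝ} (hC : ∀ y, ‖f y‖ ≤ C) :
    Integrable (fun a => ∫ y, f y ∂κ a) μ :=
  .of_bound hf.integral_kernel.aestronglyMeasurable C <| ae_of_all _ fun a =>
    (norm_integral_le_of_norm_le_const (ae_of_all _ hC)).trans_eq (by simp)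

variable {ι : Type*} [Fintype ι] {β : ι → Type*} [∀ i, MeasurableSpace (β i)]

lemma measurable_measure_pi (κ : ∀ i, Kernel α (β i)) [∀ i, IsMarkovKernel (κ i)] :
    Measurable fun a => Measure.pi fun i => κ i a := by
  refine .measure_of_isPiSystem_of_isProbabilityMeasure generateFrom_pi.symm isPiSystem_pi ?_
  rintro _ ⟨t, ht, rfl⟩
  simp_rw [Measure.pi_pi]
  exact Finset.measurable_prod _ fun i _ => (κ i).measurable_coe (ht i (Set.mem_univ i))

noncomputable def pi (κ : ∀ i, Kernel α (β i)) [∀ i, IsMarkovKernel (κ i)] :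
    Kernel α (∀ i, β i) :=
  ⟨fun a => Measure.pi fun i => κ i a, measurable_measure_pi κ⟩

instance (κ : ∀ i, Kernel α (β i)) [∀ i, IsMarkovKernel (κ i)] : IsMarkovKernel (pi κ) :=
  ⟨fun a => inferInstanceAs (IsProbabilityMeasure (Measure.pi fun i => κ i a))⟩

end ProbabilityTheory.Kernel

section Coupling

variable {ι : Type*} [Fintype ι] {S : ι → Type*} [∀ i, Fintype (S i)]
  {X : ι → Type*} [∀ i, MeasurableSpace (X i)]
  (μ : ∀ i, S i → Measure (X i)) [∀ i t, IsProbabilityMeasure (μ i t)]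

lemma measurePreserving_pi_select (s : ∀ i, S i) :
    MeasurePreserving (fun x : ∀ i, S i → X i => fun i => x i (s i))
      (Measure.pi fun i => Measure.pi (μ i)) (Measure.pi fun i => μ i (s i)) :=
  measurePreserving_pi _ _ fun i => measurePreserving_eval (μ i) (s i)

variable {E : Type*} [NormedAddCommGroup E] [NormedSpace ℝ E]

lemma integral_comp_pi_select (s : ∀ i, S i) {f : (∀ i, X i) → E}
    (hf : AEStronglyMeasurable f (Measure.pi fun i => μ i (s i))) :
    ∫ x, f (fun i => x i (s i)) ∂(Measure.pi fun i => Measure.pi (μ i)) =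
      ∫ x, f x ∂(Measure.pi fun i => μ i (s i)) := by
  rw [← (measurePreserving_pi_select μ s).map_eq] at hf ⊢
  exact (integral_map (measurePreserving_pi_select μ s).measurable.aemeasurable hf).symm

theorem sum_integral_pi_eq_integral_sum_select [DecidableEq ι]
    (f : (∀ i, S i) → (∀ i, X i) → E)
    (hf : ∀ s, Integrable (f s) (Measure.pi fun i => μ i (s i))) :
    ∑ s, ∫ x, f s x ∂(Measure.pi fun i => μ i (s i)) =
      ∫ x, ∑ s, f s (fun i => x i (s i)) ∂(Measure.pi fun i => Measure.pi (μ i)) := by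
  calc ∑ s, ∫ x, f s x ∂(Measure.pi fun i => μ i (s i))
      = ∑ s, ∫ x, f s (fun i => x i (s i)) ∂(Measure.pi fun i => Measure.pi (μ i)) :=
        Finset.sum_congr rfl fun s _ => (integral_comp_pi_select μ s (hf s).1).symm
    _ = _ := (integral_finsetSum _ fun s _ =>
        (measurePreserving_pi_select μ s).integrable_comp_of_integrable (hf s)).symm

end Coupling

theorem abs_lhv_scenario_value_le_max_abs_sup_abs_inf_general
    (N : ℕ)
    (S : Fin N → Type) [∀ n, Fintype (S n)]
    {Ω : Type} [MeasurableSpace Ω] (ν : Measure Ω) [IsProbabilityMeasure ν]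
    (P : ∀ n, S n → Kernel Ω (Set.Icc (-1 : ℝ) 1))
    (hP : ∀ n s, IsMarkovKernel (P n s))
    (f : (∀ n, S n) → ((Fin N → Set.Icc (-1 : ℝ) 1) → ℝ))
    (hmeas : ∀ s, Measurable (f s))
    (hbdd : ∀ s, ∃ C : ℝ, ∀ lam, |f s lam| ≤ C) :
    |∑ s : ∀ n, S n,
        ∫ ω, (∫ lam, f s lam ∂(Measure.pi fun n => P n (s n) ω)) ∂ν| ≤
      max
        |⨆ lam : ∀ n, S n → Set.Icc (-1 : ℝ) 1,
            ∑ s : ∀ n, S n, f s (fun n => lam n (s n))|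
        |⨅ lam : ∀ n, S n → Set.Icc (-1 : ℝ) 1,
            ∑ s : ∀ n, S n, f s (fun n => lam n (s n))| := by
  choose C hC using hbdd
  simp_rw [← Real.norm_eq_abs] at hC
  set g := fun lam : ∀ n, S n → Set.Icc (-1 : ℝ) 1 => ∑ s, f s (fun n => lam n (s n))
  have hg_le : ∀ lam, ‖g lam‖ ≤ ∑ s, C s := fun lam =>
    (norm_sum_le _ _).trans (Finset.sum_le_sum fun s _ => hC s _)
  have hg_mem : ∀ lam, g lam ∈ Icc (⨅ lam, g lam) (⨆ lam, g lam) := fun lam =>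
    ⟨ciInf_le ⟨-∑ s, C s, Set.forall_mem_range.2 fun lam => neg_le_of_abs_le (hg_le lam)⟩ lam,
      le_ciSup ⟨∑ s, C s, Set.forall_mem_range.2 fun lam => le_of_abs_le (hg_le lam)⟩ lam⟩
  have hF_int : ∀ s, Integrable (fun ω => ∫ lam, f s lam ∂(Measure.pi fun n => P n (s n) ω)) ν :=
    fun s => (Kernel.pi fun n => P n (s n)).integrable_integral_of_norm_le
      (hmeas s).stronglyMeasurable (hC s)
  have hF_mem : ∀ ω, ∑ s, ∫ lam, f s lam ∂(Measure.pi fun n => P n (s n) ω) ∈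
      Icc (⨅ lam, g lam) (⨆ lam, g lam) := fun ω => by
    have hf_int : ∀ s, Integrable (f s) (Measure.pi fun n => P n (s n) ω) := fun s =>
      .of_bound (hmeas s).aestronglyMeasurable (C s) (ae_of_all _ (hC s))
    rw [sum_integral_pi_eq_integral_sum_select (fun n t => P n t ω) f hf_int]
    exact Convex.integral_mem (convex_Icc _ _) isClosed_Icc (ae_of_all _ hg_mem) <|
      integrable_finsetSum _ fun s _ =>
        (measurePreserving_pi_select _ s).integrable_comp_of_integrable (hf_int s)
  rw [← integral_finsetSum _ fun s _ => hF_int s, max_comm]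
  obtain ⟨h_inf_le, h_le_sup⟩ := Convex.integral_mem (convex_Icc _ _) isClosed_Icc
    (ae_of_all _ hF_mem) (integrable_finsetSum _ fun s _ => hF_int s)
  exact abs_le_max_abs_abs h_inf_le h_le_sup

/-- under the hypotheses of the tight LHV constraint, the absolute value of the
LHV scenario value `B = ∑ s, ∫_Ω (∫ f s d(⊗ₙ P n (s n) ω)) dν(ω)` of a Bell functional
satisfies `|B| ≤ max {|B_Φ^sup|, |B_Φ^inf|}`. -/
theorem abs_lhv_scenario_value_le_max_abs_sup_abs_inf
    (N : ℕ) (hN : 1 ≤ N)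
    (S : Fin N → Type) [∀ n, Fintype (S n)] [∀ n, Nonempty (S n)]
    {Ω : Type} [MeasurableSpace Ω] (ν : Measure Ω) [IsProbabilityMeasure ν]
    (P : ∀ n, S n → Kernel Ω (Set.Icc (-1 : ℝ) 1))
    (hP : ∀ n s, IsMarkovKernel (P n s))
    (f : (∀ n, S n) → ((Fin N → Set.Icc (-1 : ℝ) 1) → ℝ))
    (hmeas : ∀ s, Measurable (f s))
    (hbdd : ∀ s, ∃ C : ℝ, ∀ lam, |f s lam| ≤ C) :
    |∑ s : ∀ n, S n,
        ∫ ω, (∫ lam, f s lam ∂(Measure.pi fun n => P n (s n) ω)) ∂ν| ≤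
      max
        |⨆ lam : ∀ n, S n → Set.Icc (-1 : ℝ) 1,
            ∑ s : ∀ n, S n, f s (fun n => lam n (s n))|
        |⨅ lam : ∀ n, S n → Set.Icc (-1 : ℝ) 1,
            ∑ s : ∀ n, S n, f s (fun n => lam n (s n))| :=
  abs_lhv_scenario_value_le_max_abs_sup_abs_inf_general N S ν P hP f hmeas hbdd
end
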